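/- arXiv:2212.13383 — 2 statements merged into one kernel-verified Lean document; each statement's English description precedes it below -/
import Mathlib

section
/- (CDF, Case 2.) Suppose θ₁+θ₂ = θ₁′ and θ₁+θ₂ ≠ θ₂′. Then for the joint CDF F(y₁,y₂) = ∫_a^{y₁} ∫_a^{y₂} f(u,v) dv du of the DPRH model: if a < y₁ < y₂ < b then F(y₁,y₂) = F₀(y₁)^{θ₁+θ₂}·[1 + θ₂ ln(F₀(y₂)/F₀(y₁))], and if a < y₂ < y₁ < b then F(y₁,y₂) = F₀(y₂)^{θ₁+θ₂} + (θ₁ F₀(y₂)^{θ₂′}/(θ₁+θ₂−θ₂′))·[F₀(y₁)^{θ₁+θ₂−θ₂′} − F₀(y₂)^{θ₁+θ₂−θ₂′}]. -/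
open MeasureTheory Set

noncomputable def dprh (a b : ℝ) (F₀ f₀ : ℝ → ℝ) (θ₁ θ₂ θ₁' θ₂' : ℝ) (y₁ y₂ : ℝ) : ℝ :=
  if a < y₁ ∧ y₁ < y₂ ∧ y₂ < b then
    θ₁' * θ₂ * f₀ y₁ * f₀ y₂ * F₀ y₁ ^ (θ₁' - 1) * F₀ y₂ ^ (θ₁ + θ₂ - θ₁' - 1)
  else if a < y₂ ∧ y₂ < y₁ ∧ y₁ < b then
    θ₁ * θ₂' * f₀ y₁ * f₀ y₂ * F₀ y₁ ^ (θ₁ + θ₂ - θ₂' - 1) * F₀ y₂ ^ (θ₂' - 1)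
  else 0

open Filter Topology

/-!
The inner integral `∫_a^{y₂} f(u, v) dv` splits at `v = u`. Below the diagonal it is a power of
`F₀(v)`; above it, `θ₁' = θ₁ + θ₂` makes the exponent of `F₀(v)` equal to `-1`, so a logarithm
appears. For `x < y₂` the outer integrand then has the primitive
`F₀(x)^(θ₁+θ₂) (1 + θ₂ log (F₀ y₂ / F₀ x))`, which tends to `0` as `x → a⁺` because
`t^s log t → 0`; this primitive at `y₁` is the first formula, and at `y₂` it gives the first term
of the second. All integrands are nonnegative, so the fundamental theorem of calculus applies to
the improper integrals at `a` without a separate integrability argument.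
-/

/-- The one-sided limits make the extension of `G` by `La` and `Lc` continuous on `[a, c]`, and a
nonnegative derivative of a function continuous on `[a, c]` is integrable. -/
theorem intervalIntegrable_and_integral_eq_sub_of_hasDerivAt_of_nonneg {G g : ℝ → ℝ}
    {a c La Lc : ℝ} (hac : a < c) (hderiv : ∀ x ∈ Ioo a c, HasDerivAt G (g x) x)
    (hg : ∀ x ∈ Ioo a c, 0 ≤ g x) (ha : Tendsto G (𝓝[>] a) (𝓝 La))
    (hc : Tendsto G (𝓝[<] c) (𝓝 Lc)) :
    IntervalIntegrable g volume a c ∧ ∫ x in a..c, g x = Lc - La := by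
  classical
  set H := Function.update (Function.update G a La) c Lc
  have hH : ∀ x ∈ Ioo a c, HasDerivAt H (g x) x := fun x hx =>
    (hderiv x hx).congr_of_eventuallyEq <| by
      filter_upwards [Ioo_mem_nhds hx.1 hx.2] with y hy
      simp [H, hy.1.ne', hy.2.ne]
  have hcont : ContinuousOn H (Icc a c) := by
    rw [continuousOn_update_iff, continuousOn_update_iff, Icc_sdiff_right, Ico_sdiff_left]
    refine ⟨⟨fun x hx => (hderiv x hx).continuousAt.continuousWithinAt,
      fun _ => ha.mono_left (nhdsWithin_mono _ Ioo_subset_Ioi_self)⟩, fun _ => ?_⟩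
    refine (hc.congr' ?_).mono_left (nhdsWithin_mono _ Ico_subset_Iio_self)
    filter_upwards [Ioo_mem_nhdsLT hac] with x hx using
      (Function.update_of_ne hx.1.ne' _ _).symm
  have hint : IntervalIntegrable g volume a c :=
    (intervalIntegrable_iff_integrableOn_Ioc_of_le hac.le).2
      (intervalIntegral.integrableOn_deriv_of_nonneg hcont hH hg)
  exact ⟨hint, intervalIntegral.integral_eq_sub_of_hasDerivAt_of_tendsto hac hderiv hint ha hc⟩

theorem tendsto_rpow_mul_one_add_log_sub_nhdsGT_zero {s : ℝ} (hs : 0 < s) (θ c : ℝ) :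
    Tendsto (fun t => t ^ s * (1 + θ * (Real.log c - Real.log t))) (𝓝[>] 0) (𝓝 0) := by
  have hpow : Tendsto (fun t : ℝ => t ^ s) (𝓝[>] 0) (𝓝 0) := by
    simpa [Real.zero_rpow hs.ne'] using
      (Real.continuousAt_rpow_const 0 s (Or.inr hs.le)).tendsto.mono_left nhdsWithin_le_nhds
  have h := (hpow.const_mul (1 + θ * Real.log c)).sub
    ((tendsto_log_mul_rpow_nhdsGT_zero hs).const_mul θ)
  rw [mul_zero, mul_zero, sub_zero] at h
  exact h.congr fun t => by ring

theorem HasDerivAt.rpow_mul_one_add_log_sub {F : ℝ → ℝ} {f' x : ℝ} (hF : HasDerivAt F f' x)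
    (hx : 0 < F x) (s θ c : ℝ) :
    HasDerivAt (fun t => F t ^ s * (1 + θ * (Real.log c - Real.log (F t))))
      (f' * F x ^ (s - 1) * (s * (1 + θ * (Real.log c - Real.log (F x))) - θ)) x := by
  have h := (hF.rpow_const (p := s) (Or.inl hx.ne')).mul
    ((((hF.log hx.ne').const_sub (Real.log c)).const_mul θ).const_add 1)
  refine h.congr_deriv ?_
  rw [Real.rpow_sub_one hx.ne']
  field_simp
  ring

section Dprh

variable {a b : ℝ} {F₀ f₀ : ℝ → ℝ} {θ₁ θ₂ θ₁' θ₂' : ℝ}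

theorem dprh_of_lt {u v : ℝ} (hu : a < u) (huv : u < v) (hv : v < b) :
    dprh a b F₀ f₀ θ₁ θ₂ θ₁' θ₂' u v =
      θ₁' * θ₂ * f₀ u * f₀ v * F₀ u ^ (θ₁' - 1) * F₀ v ^ (θ₁ + θ₂ - θ₁' - 1) :=
  if_pos ⟨hu, huv, hv⟩

theorem dprh_of_gt {u v : ℝ} (hv : a < v) (hvu : v < u) (hu : u < b) :
    dprh a b F₀ f₀ θ₁ θ₂ θ₁' θ₂' u v =
      θ₁ * θ₂' * f₀ u * f₀ v * F₀ u ^ (θ₁ + θ₂ - θ₂' - 1) * F₀ v ^ (θ₂' - 1) := by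
  rw [dprh, if_neg fun h => h.2.1.not_gt hvu, if_pos ⟨hv, hvu, hu⟩]

theorem dprh_nonneg (hθ₁ : 0 ≤ θ₁) (hθ₂ : 0 ≤ θ₂) (hθ₁' : 0 ≤ θ₁') (hθ₂' : 0 ≤ θ₂')
    (hf₀ : ∀ y ∈ Ioo a b, 0 ≤ f₀ y) (hF₀ : ∀ y ∈ Ioo a b, 0 ≤ F₀ y) (u v : ℝ) :
    0 ≤ dprh a b F₀ f₀ θ₁ θ₂ θ₁' θ₂' u v := by
  have hprod : ∀ {x y : ℝ}, x ∈ Ioo a b → y ∈ Ioo a b → ∀ {c p q : ℝ}, 0 ≤ c →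
      0 ≤ c * f₀ x * f₀ y * F₀ x ^ p * F₀ y ^ q := fun hx hy _ _ _ hc =>
    mul_nonneg (mul_nonneg (mul_nonneg (mul_nonneg hc (hf₀ _ hx)) (hf₀ _ hy))
      (Real.rpow_nonneg (hF₀ _ hx) _)) (Real.rpow_nonneg (hF₀ _ hy) _)
  unfold dprh
  split_ifs with h h'
  · exact hprod ⟨h.1, h.2.1.trans h.2.2⟩ ⟨h.1.trans h.2.1, h.2.2⟩ (mul_nonneg hθ₁' hθ₂)
  · exact hprod ⟨h'.1.trans h'.2.1, h'.2.2⟩ ⟨h'.1, h'.2.1.trans h'.2.2⟩ (mul_nonneg hθ₁ hθ₂')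
  · exact le_rfl

theorem intervalIntegrable_and_integral_dprh_of_le
    (hderiv : ∀ y ∈ Ioo a b, HasDerivAt F₀ (f₀ y) y) (hf₀ : ∀ y ∈ Ioo a b, 0 ≤ f₀ y)
    (hF₀ : ∀ y ∈ Ioo a b, 0 < F₀ y) (hFa : Tendsto F₀ (𝓝[>] a) (𝓝 0))
    (hθ₁ : 0 ≤ θ₁) (hθ₂ : 0 ≤ θ₂) (hθ₁' : 0 ≤ θ₁') (hθ₂' : 0 < θ₂')
    {u y : ℝ} (hy : a < y) (hyu : y ≤ u) (hu : u < b) :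
    IntervalIntegrable (fun v => dprh a b F₀ f₀ θ₁ θ₂ θ₁' θ₂' u v) volume a y ∧
      ∫ v in a..y, dprh a b F₀ f₀ θ₁ θ₂ θ₁' θ₂' u v =
        θ₁ * f₀ u * F₀ u ^ (θ₁ + θ₂ - θ₂' - 1) * F₀ y ^ θ₂' := by
  set C := θ₁ * f₀ u * F₀ u ^ (θ₁ + θ₂ - θ₂' - 1)
  have hG : ∀ v ∈ Ioo a b,
      HasDerivAt (fun t => C * F₀ t ^ θ₂') (C * (f₀ v * θ₂' * F₀ v ^ (θ₂' - 1))) v :=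
    fun v hv => ((hderiv v hv).rpow_const (Or.inl (hF₀ v hv).ne')).const_mul C
  have hGa : Tendsto (fun t => C * F₀ t ^ θ₂') (𝓝[>] a) (𝓝 0) := by
    simpa [Real.zero_rpow hθ₂'.ne'] using
      ((Real.continuousAt_rpow_const 0 θ₂' (Or.inr hθ₂'.le)).tendsto.comp hFa).const_mul C
  have hyab : y ∈ Ioo a b := ⟨hy, hyu.trans_lt hu⟩
  have h := intervalIntegrable_and_integral_eq_sub_of_hasDerivAt_of_nonneg hy
    (fun v hv => (hG v ⟨hv.1, hv.2.trans hyab.2⟩).congr_deriv <| by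
      rw [dprh_of_gt hv.1 (hv.2.trans_le hyu) hu]; ring)
    (fun v _ => dprh_nonneg hθ₁ hθ₂ hθ₁' hθ₂'.le hf₀ (fun y hy => (hF₀ y hy).le) u v) hGa
    ((hG y hyab).continuousAt.continuousWithinAt.tendsto)
  exact ⟨h.1, h.2.trans (sub_zero _)⟩

theorem integral_dprh_of_lt
    (hderiv : ∀ y ∈ Ioo a b, HasDerivAt F₀ (f₀ y) y) (hf₀ : ∀ y ∈ Ioo a b, 0 ≤ f₀ y)
    (hF₀ : ∀ y ∈ Ioo a b, 0 < F₀ y) (hFa : Tendsto F₀ (𝓝[>] a) (𝓝 0))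
    (hθ₁ : 0 ≤ θ₁) (hθ₂ : 0 ≤ θ₂) (hθ₂' : 0 < θ₂')
    {u y : ℝ} (hu : a < u) (huy : u < y) (hy : y < b) :
    ∫ v in a..y, dprh a b F₀ f₀ θ₁ θ₂ (θ₁ + θ₂) θ₂' u v =
      f₀ u * F₀ u ^ (θ₁ + θ₂ - 1) *
        (θ₁ + (θ₁ + θ₂) * θ₂ * (Real.log (F₀ y) - Real.log (F₀ u))) := by
  have hs : 0 ≤ θ₁ + θ₂ := add_nonneg hθ₁ hθ₂
  have hub : u ∈ Ioo a b := ⟨hu, huy.trans hy⟩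
  obtain ⟨hint₁, hval₁⟩ := intervalIntegrable_and_integral_dprh_of_le hderiv hf₀ hF₀ hFa
    hθ₁ hθ₂ hs hθ₂' hu le_rfl hub.2
  set C := (θ₁ + θ₂) * θ₂ * f₀ u * F₀ u ^ (θ₁ + θ₂ - 1) with hC
  have hG : ∀ v ∈ Ioo a b,
      HasDerivAt (fun t => C * Real.log (F₀ t)) (C * (f₀ v / F₀ v)) v :=
    fun v hv => ((hderiv v hv).log (hF₀ v hv).ne').const_mul C
  obtain ⟨hint₂, hval₂⟩ := intervalIntegrable_and_integral_eq_sub_of_hasDerivAt_of_nonneg huy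
    (fun v hv => (hG v ⟨hu.trans hv.1, hv.2.trans hy⟩).congr_deriv <| by
      rw [dprh_of_lt hu hv.1 (hv.2.trans hy), show θ₁ + θ₂ - (θ₁ + θ₂) - 1 = (-1 : ℝ) by ring,
        Real.rpow_neg_one]
      ring)
    (fun v _ => dprh_nonneg hθ₁ hθ₂ hs hθ₂'.le hf₀ (fun y hy => (hF₀ y hy).le) u v)
    (hG u hub).continuousAt.continuousWithinAt.tendsto
    (hG y ⟨hu.trans huy, hy⟩).continuousAt.continuousWithinAt.tendsto
  have hpow : F₀ u ^ (θ₁ + θ₂ - θ₂' - 1) * F₀ u ^ θ₂' = F₀ u ^ (θ₁ + θ₂ - 1) := by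
    rw [← Real.rpow_add (hF₀ u hub)]
    ring_nf
  rw [← intervalIntegral.integral_add_adjacent_intervals hint₁ hint₂, hval₁, hval₂,
    mul_assoc _ (F₀ u ^ _), hpow, hC]
  ring

theorem intervalIntegrable_and_integral_integral_dprh_of_le
    (hderiv : ∀ y ∈ Ioo a b, HasDerivAt F₀ (f₀ y) y) (hf₀ : ∀ y ∈ Ioo a b, 0 ≤ f₀ y)
    (hF₀ : ∀ y ∈ Ioo a b, 0 < F₀ y) (hFa : Tendsto F₀ (𝓝[>] a) (𝓝 0))
    (hθ₁ : 0 ≤ θ₁) (hθ₂ : 0 ≤ θ₂) (hs : 0 < θ₁ + θ₂) (hθ₂' : 0 < θ₂')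
    {c y : ℝ} (hc : a < c) (hcy : c ≤ y) (hy : y < b) :
    IntervalIntegrable (fun u => ∫ v in a..y, dprh a b F₀ f₀ θ₁ θ₂ (θ₁ + θ₂) θ₂' u v)
        volume a c ∧
      ∫ u in a..c, ∫ v in a..y, dprh a b F₀ f₀ θ₁ θ₂ (θ₁ + θ₂) θ₂' u v =
        F₀ c ^ (θ₁ + θ₂) * (1 + θ₂ * (Real.log (F₀ y) - Real.log (F₀ c))) := by
  have hG : ∀ x ∈ Ioo a b, HasDerivAt
      (fun t => F₀ t ^ (θ₁ + θ₂) * (1 + θ₂ * (Real.log (F₀ y) - Real.log (F₀ t))))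
      (f₀ x * F₀ x ^ (θ₁ + θ₂ - 1) *
        ((θ₁ + θ₂) * (1 + θ₂ * (Real.log (F₀ y) - Real.log (F₀ x))) - θ₂)) x :=
    fun x hx => (hderiv x hx).rpow_mul_one_add_log_sub (hF₀ x hx) _ _ _
  have hFa' : Tendsto F₀ (𝓝[>] a) (𝓝[>] 0) := tendsto_nhdsWithin_iff.2
    ⟨hFa, by filter_upwards [Ioo_mem_nhdsGT (hc.trans (hcy.trans_lt hy))] with t ht
      using hF₀ t ht⟩
  have h := intervalIntegrable_and_integral_eq_sub_of_hasDerivAt_of_nonneg hc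
    (fun u hu => (hG u ⟨hu.1, (hu.2.trans_le hcy).trans hy⟩).congr_deriv <| by
      rw [integral_dprh_of_lt hderiv hf₀ hF₀ hFa hθ₁ hθ₂ hθ₂' hu.1 (hu.2.trans_le hcy) hy]
      ring)
    (fun u _ => intervalIntegral.integral_nonneg (hc.trans_le hcy).le
      fun v _ => dprh_nonneg hθ₁ hθ₂ hs.le hθ₂'.le hf₀ (fun y hy => (hF₀ y hy).le) u v)
    ((tendsto_rpow_mul_one_add_log_sub_nhdsGT_zero hs _ _).comp hFa')
    (hG c ⟨hc, hcy.trans_lt hy⟩).continuousAt.continuousWithinAt.tendsto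
  exact ⟨h.1, h.2.trans (sub_zero _)⟩

theorem intervalIntegrable_and_integral_integral_dprh_of_lt
    (hderiv : ∀ y ∈ Ioo a b, HasDerivAt F₀ (f₀ y) y) (hf₀ : ∀ y ∈ Ioo a b, 0 ≤ f₀ y)
    (hF₀ : ∀ y ∈ Ioo a b, 0 < F₀ y) (hFa : Tendsto F₀ (𝓝[>] a) (𝓝 0))
    (hθ₁ : 0 ≤ θ₁) (hθ₂ : 0 ≤ θ₂) (hθ₁' : 0 ≤ θ₁') (hθ₂' : 0 < θ₂') (hne : θ₁ + θ₂ ≠ θ₂')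
    {y c : ℝ} (hy : a < y) (hyc : y < c) (hc : c < b) :
    IntervalIntegrable (fun u => ∫ v in a..y, dprh a b F₀ f₀ θ₁ θ₂ θ₁' θ₂' u v) volume y c ∧
      ∫ u in y..c, ∫ v in a..y, dprh a b F₀ f₀ θ₁ θ₂ θ₁' θ₂' u v =
        θ₁ * F₀ y ^ θ₂' / (θ₁ + θ₂ - θ₂') *
          (F₀ c ^ (θ₁ + θ₂ - θ₂') - F₀ y ^ (θ₁ + θ₂ - θ₂')) := by
  set C := θ₁ * F₀ y ^ θ₂' / (θ₁ + θ₂ - θ₂') with hC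
  have hG : ∀ x ∈ Ioo a b, HasDerivAt (fun t => C * F₀ t ^ (θ₁ + θ₂ - θ₂'))
      (C * (f₀ x * (θ₁ + θ₂ - θ₂') * F₀ x ^ (θ₁ + θ₂ - θ₂' - 1))) x :=
    fun x hx => ((hderiv x hx).rpow_const (Or.inl (hF₀ x hx).ne')).const_mul C
  have h := intervalIntegrable_and_integral_eq_sub_of_hasDerivAt_of_nonneg hyc
    (fun u hu => (hG u ⟨hy.trans hu.1, hu.2.trans hc⟩).congr_deriv <| by
      rw [(intervalIntegrable_and_integral_dprh_of_le hderiv hf₀ hF₀ hFa hθ₁ hθ₂ hθ₁' hθ₂' hy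
        hu.1.le (hu.2.trans hc)).2, hC]
      field_simp [sub_ne_zero.2 hne])
    (fun u _ => intervalIntegral.integral_nonneg hy.le
      fun v _ => dprh_nonneg hθ₁ hθ₂ hθ₁' hθ₂'.le hf₀ (fun y hy => (hF₀ y hy).le) u v)
    (hG y ⟨hy, hyc.trans hc⟩).continuousAt.continuousWithinAt.tendsto
    (hG c ⟨hy.trans hyc, hc⟩).continuousAt.continuousWithinAt.tendsto
  exact ⟨h.1, h.2.trans (mul_sub C _ _).symm⟩

end Dprh

theorem dprh_cdf_case2_general
    (a b : ℝ) (F₀ f₀ : ℝ → ℝ)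
    (hderiv : ∀ y ∈ Ioo a b, HasDerivAt F₀ (f₀ y) y)
    (hf₀pos : ∀ y ∈ Ioo a b, 0 < f₀ y)
    (hF₀pos : ∀ y ∈ Ioo a b, 0 < F₀ y)
    (hFa : Filter.Tendsto F₀ (nhdsWithin a (Ioi a)) (nhds 0))
    (θ₁ θ₂ θ₁' θ₂' : ℝ) (hθ₁ : 0 < θ₁) (hθ₂ : 0 < θ₂) (hθ₁' : 0 < θ₁') (hθ₂' : 0 < θ₂')
    (heq₁ : θ₁ + θ₂ = θ₁') (hne₂ : θ₁ + θ₂ ≠ θ₂') (y₁ y₂ : ℝ)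
    :
    (a < y₁ → y₁ < y₂ → y₂ < b →
      (∫ u in a..y₁, ∫ v in a..y₂, dprh a b F₀ f₀ θ₁ θ₂ θ₁' θ₂' u v) =
        F₀ y₁ ^ (θ₁ + θ₂) * (1 + θ₂ * Real.log (F₀ y₂ / F₀ y₁))) ∧
    (a < y₂ → y₂ < y₁ → y₁ < b →
      (∫ u in a..y₁, ∫ v in a..y₂, dprh a b F₀ f₀ θ₁ θ₂ θ₁' θ₂' u v) =
        F₀ y₂ ^ (θ₁ + θ₂) + θ₁ * F₀ y₂ ^ θ₂' / (θ₁ + θ₂ - θ₂') *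
          (F₀ y₁ ^ (θ₁ + θ₂ - θ₂') - F₀ y₂ ^ (θ₁ + θ₂ - θ₂'))) := by
  subst heq₁
  have hf₀ : ∀ y ∈ Ioo a b, 0 ≤ f₀ y := fun y hy => (hf₀pos y hy).le
  refine ⟨fun h₁ h₁₂ h₂ => ?_, fun h₂ h₂₁ h₁ => ?_⟩
  · rw [(intervalIntegrable_and_integral_integral_dprh_of_le hderiv hf₀ hF₀pos hFa hθ₁.le
      hθ₂.le hθ₁' hθ₂' h₁ h₁₂.le h₂).2, Real.log_div (hF₀pos y₂ ⟨h₁.trans h₁₂, h₂⟩).ne'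
      (hF₀pos y₁ ⟨h₁, h₁₂.trans h₂⟩).ne']
  · obtain ⟨hint₁, hval₁⟩ := intervalIntegrable_and_integral_integral_dprh_of_le hderiv hf₀
      hF₀pos hFa hθ₁.le hθ₂.le hθ₁' hθ₂' h₂ le_rfl (h₂₁.trans h₁)
    obtain ⟨hint₂, hval₂⟩ := intervalIntegrable_and_integral_integral_dprh_of_lt hderiv hf₀
      hF₀pos hFa hθ₁.le hθ₂.le hθ₁'.le hθ₂' hne₂ h₂ h₂₁ h₁
    rw [← intervalIntegral.integral_add_adjacent_intervals hint₁ hint₂, hval₁, hval₂, sub_self,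
      mul_zero, add_zero, mul_one]

theorem dprh_cdf_case2
    (a b : ℝ) (hab : a < b) (F₀ f₀ : ℝ → ℝ)
    (hderiv : ∀ y ∈ Ioo a b, HasDerivAt F₀ (f₀ y) y)
    (hf₀cont : ContinuousOn f₀ (Ioo a b))
    (hmono : StrictMonoOn F₀ (Ioo a b))
    (hf₀pos : ∀ y ∈ Ioo a b, 0 < f₀ y)
    (hF₀pos : ∀ y ∈ Ioo a b, 0 < F₀ y)
    (hF₀lt1 : ∀ y ∈ Ioo a b, F₀ y < 1)
    (hFa : Filter.Tendsto F₀ (nhdsWithin a (Ioi a)) (nhds 0))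
    (hFb : Filter.Tendsto F₀ (nhdsWithin b (Iio b)) (nhds 1))
    (θ₁ θ₂ θ₁' θ₂' : ℝ) (hθ₁ : 0 < θ₁) (hθ₂ : 0 < θ₂) (hθ₁' : 0 < θ₁') (hθ₂' : 0 < θ₂')
    (heq₁ : θ₁ + θ₂ = θ₁') (hne₂ : θ₁ + θ₂ ≠ θ₂') (y₁ y₂ : ℝ)
    :
    (a < y₁ → y₁ < y₂ → y₂ < b →
      (∫ u in a..y₁, ∫ v in a..y₂, dprh a b F₀ f₀ θ₁ θ₂ θ₁' θ₂' u v) =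
        F₀ y₁ ^ (θ₁ + θ₂) * (1 + θ₂ * Real.log (F₀ y₂ / F₀ y₁))) ∧
    (a < y₂ → y₂ < y₁ → y₁ < b →
      (∫ u in a..y₁, ∫ v in a..y₂, dprh a b F₀ f₀ θ₁ θ₂ θ₁' θ₂' u v) =
        F₀ y₂ ^ (θ₁ + θ₂) + θ₁ * F₀ y₂ ^ θ₂' / (θ₁ + θ₂ - θ₂') *
          (F₀ y₁ ^ (θ₁ + θ₂ - θ₂') - F₀ y₂ ^ (θ₁ + θ₂ - θ₂'))) :=
  dprh_cdf_case2_general a b F₀ f₀ hderiv hf₀pos hF₀pos hFa θ₁ θ₂ θ₁' θ₂' hθ₁ hθ₂ hθ₁' hθ₂' heq₁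
    hne₂ y₁ y₂
end

section
/- (CDF, Case 4.) Suppose θ₁+θ₂ = θ₁′ = θ₂′. Then for the joint CDF F(y₁,y₂) = ∫_a^{y₁} ∫_a^{y₂} f(u,v) dv du of the DPRH model: if a < y₁ < y₂ < b then F(y₁,y₂) = F₀(y₁)^{θ₁+θ₂}·[1 + θ₂ ln(F₀(y₂)/F₀(y₁))], and if a < y₂ < y₁ < b then F(y₁,y₂) = F₀(y₂)^{θ₁+θ₂}·[1 + θ₁ ln(F₀(y₁)/F₀(y₂))]. -/
open MeasureTheory Set

/-!
Write `θ = θ₁ + θ₂`. When `θ₁' = θ₂' = θ`, on each triangle the density is a product of the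
factors `f₀ F₀^(θ-1)` and `f₀ / F₀`, with primitives `F₀^θ / θ` and `log F₀`. Hence for `u < y`
the inner integral `∫_a^y f(u, v) dv` is `f₀ F₀^(θ-1)(u) (θ₁ + θ θ₂ log (F₀ y / F₀ u))`, which is
the derivative of `F₀(u)^θ (1 + θ₂ log (F₀ y / F₀ u))`; this primitive tends to `0` at `a⁺`
because `t^θ log t → 0`. For `y₂ < y₁` the strip `y₂ < u < y₁` adds
`θ₁ F₀(y₂)^θ log (F₀ y₁ / F₀ y₂)`. All integrands are nonnegative derivatives, so the improper
integrals converge.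
-/
open Filter Topology Real
open scoped Interval

section Ioo

variable {f g : ℝ → ℝ} {a b : ℝ}

theorem intervalIntegral.integral_congr_Ioo (hab : a ≤ b) (h : EqOn f g (Ioo a b)) :
    ∫ x in a..b, f x = ∫ x in a..b, g x := by
  rw [intervalIntegral.integral_of_le hab, intervalIntegral.integral_of_le hab,
    integral_Ioc_eq_integral_Ioo, integral_Ioc_eq_integral_Ioo,
    setIntegral_congr_fun measurableSet_Ioo h]

theorem IntervalIntegrable.congr_Ioo (hf : IntervalIntegrable f volume a b) (hab : a ≤ b)
    (h : EqOn f g (Ioo a b)) : IntervalIntegrable g volume a b := by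
  rw [intervalIntegrable_iff_integrableOn_Ioc_of_le hab, integrableOn_Ioc_iff_integrableOn_Ioo]
    at hf ⊢
  exact hf.congr_fun h measurableSet_Ioo

end Ioo

/-- Extending `g` by its limit at `a` makes it continuous on `[a, c]`, so the derivative is
integrable as soon as it is nonnegative. -/
theorem intervalIntegrable_deriv_of_nonneg_of_tendsto {g g' : ℝ → ℝ} {a c L : ℝ} (hac : a < c)
    (hg : ∀ x ∈ Ioc a c, HasDerivAt g (g' x) x) (hg' : ∀ x ∈ Ioo a c, 0 ≤ g' x)
    (hgL : Tendsto g (𝓝[>] a) (𝓝 L)) : IntervalIntegrable g' volume a c := by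
  classical
  have hcont : ContinuousOn (Function.update g a L) (Icc a c) := by
    intro x hx
    rcases eq_or_ne x a with rfl | hxa
    · refine continuousWithinAt_update_same.2 (hgL.mono_left (nhdsWithin_mono _ ?_))
      exact fun y hy => lt_of_le_of_ne hy.1.1 (Ne.symm hy.2)
    · have hx' : x ∈ Ioc a c := ⟨lt_of_le_of_ne hx.1 hxa.symm, hx.2⟩
      refine ((hg x hx').continuousAt.congr ?_).continuousWithinAt
      filter_upwards [eventually_ne_nhds hxa] with y hy using (Function.update_of_ne hy _ _).symm
  refine intervalIntegral.intervalIntegrable_deriv_of_nonneg (g := Function.update g a L)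
    (by rwa [uIcc_of_le hac.le]) (fun x hx => ?_) (by rwa [min_eq_left hac.le, max_eq_right hac.le])
  rw [min_eq_left hac.le, max_eq_right hac.le] at hx
  refine (hg x ⟨hx.1, hx.2.le⟩).congr_of_eventuallyEq ?_
  filter_upwards [eventually_ne_nhds hx.1.ne'] with y hy using Function.update_of_ne hy _ _

theorem integral_eq_sub_of_hasDerivAt_of_nonneg_of_tendsto {g g' : ℝ → ℝ} {a c L : ℝ}
    (hac : a < c) (hg : ∀ x ∈ Ioc a c, HasDerivAt g (g' x) x) (hg' : ∀ x ∈ Ioo a c, 0 ≤ g' x)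
    (hgL : Tendsto g (𝓝[>] a) (𝓝 L)) : ∫ x in a..c, g' x = g c - L :=
  intervalIntegral.integral_eq_sub_of_hasDerivAt_of_tendsto hac
    (fun x hx => hg x ⟨hx.1, hx.2.le⟩)
    (intervalIntegrable_deriv_of_nonneg_of_tendsto hac hg hg' hgL)
    hgL (hg c ⟨hac, le_rfl⟩).continuousAt.continuousWithinAt

section DPRH

variable {a b : ℝ} {F₀ f₀ : ℝ → ℝ}

theorem dprh_case4_of_lt {θ₁ θ₂ u v : ℝ} (hu : a < u) (huv : u < v) (hv : v < b) :
    dprh a b F₀ f₀ θ₁ θ₂ (θ₁ + θ₂) (θ₁ + θ₂) u v =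
      (θ₁ + θ₂) * θ₂ * (f₀ u * F₀ u ^ (θ₁ + θ₂ - 1)) * (f₀ v / F₀ v) := by
  rw [dprh, if_pos ⟨hu, huv, hv⟩, show θ₁ + θ₂ - (θ₁ + θ₂) - 1 = -1 by ring, rpow_neg_one]
  ring

theorem dprh_case4_of_gt {θ₁ θ₂ u v : ℝ} (hv : a < v) (hvu : v < u) (hu : u < b) :
    dprh a b F₀ f₀ θ₁ θ₂ (θ₁ + θ₂) (θ₁ + θ₂) u v =
      θ₁ * (θ₁ + θ₂) * (f₀ u / F₀ u) * (f₀ v * F₀ v ^ (θ₁ + θ₂ - 1)) := by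
  rw [dprh, if_neg fun h => hvu.not_gt h.2.1, if_pos ⟨hv, hvu, hu⟩,
    show θ₁ + θ₂ - (θ₁ + θ₂) - 1 = -1 by ring, rpow_neg_one]
  ring

theorem intervalIntegrable_and_integral_mul_rpow_sub_one
    (hderiv : ∀ y ∈ Ioo a b, HasDerivAt F₀ (f₀ y) y) (hf₀pos : ∀ y ∈ Ioo a b, 0 < f₀ y)
    (hF₀pos : ∀ y ∈ Ioo a b, 0 < F₀ y) (hFa : Tendsto F₀ (𝓝[>] a) (𝓝 0))
    {θ c : ℝ} (hθ : 0 < θ) (hc : c ∈ Ioo a b) :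
    IntervalIntegrable (fun v => f₀ v * F₀ v ^ (θ - 1)) volume a c ∧
      ∫ v in a..c, f₀ v * F₀ v ^ (θ - 1) = F₀ c ^ θ / θ := by
  have hsub : Ioc a c ⊆ Ioo a b := fun x hx => ⟨hx.1, hx.2.trans_lt hc.2⟩
  have hg (x) (hx : x ∈ Ioc a c) :
      HasDerivAt (fun v => F₀ v ^ θ / θ) (f₀ x * F₀ x ^ (θ - 1)) x := by
    refine (((hderiv x (hsub hx)).rpow_const (.inl (hF₀pos x (hsub hx)).ne')).div_const
      θ).congr_deriv ?_
    field_simp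
  have hg' (x) (hx : x ∈ Ioo a c) : 0 ≤ f₀ x * F₀ x ^ (θ - 1) :=
    mul_nonneg (hf₀pos x (hsub (Ioo_subset_Ioc_self hx))).le
      (rpow_nonneg (hF₀pos x (hsub (Ioo_subset_Ioc_self hx))).le _)
  have hgL : Tendsto (fun v => F₀ v ^ θ / θ) (𝓝[>] a) (𝓝 0) := by
    simpa [zero_rpow hθ.ne'] using (hFa.rpow_const (.inr hθ.le)).div_const θ
  exact ⟨intervalIntegrable_deriv_of_nonneg_of_tendsto hc.1 hg hg' hgL,
    by simpa using integral_eq_sub_of_hasDerivAt_of_nonneg_of_tendsto hc.1 hg hg' hgL⟩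

theorem intervalIntegrable_and_integral_div_eq_log_sub
    (hderiv : ∀ y ∈ Ioo a b, HasDerivAt F₀ (f₀ y) y) (hf₀pos : ∀ y ∈ Ioo a b, 0 < f₀ y)
    (hF₀pos : ∀ y ∈ Ioo a b, 0 < F₀ y) {u c : ℝ} (hu : a < u) (huc : u < c) (hc : c < b) :
    IntervalIntegrable (fun v => f₀ v / F₀ v) volume u c ∧
      ∫ v in u..c, f₀ v / F₀ v = log (F₀ c) - log (F₀ u) := by
  have hsub : Icc u c ⊆ Ioo a b := fun x hx => ⟨hu.trans_le hx.1, hx.2.trans_lt hc⟩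
  have hlog (x) (hx : x ∈ Icc u c) : HasDerivAt (fun v => log (F₀ v)) (f₀ x / F₀ x) x :=
    (hderiv x (hsub hx)).log (hF₀pos x (hsub hx)).ne'
  have hg (x) (hx : x ∈ Ioc u c) := hlog x (Ioc_subset_Icc_self hx)
  have hg' (x) (hx : x ∈ Ioo u c) : 0 ≤ f₀ x / F₀ x :=
    div_nonneg (hf₀pos x (hsub (Ioo_subset_Icc_self hx))).le
      (hF₀pos x (hsub (Ioo_subset_Icc_self hx))).le
  have hgL : Tendsto (fun v => log (F₀ v)) (𝓝[>] u) (𝓝 (log (F₀ u))) :=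
    (hlog u (left_mem_Icc.2 huc.le)).continuousAt.continuousWithinAt
  exact ⟨intervalIntegrable_deriv_of_nonneg_of_tendsto huc hg hg' hgL,
    integral_eq_sub_of_hasDerivAt_of_nonneg_of_tendsto huc hg hg' hgL⟩

theorem integral_dprh_case4_of_lt
    (hderiv : ∀ y ∈ Ioo a b, HasDerivAt F₀ (f₀ y) y) (hf₀pos : ∀ y ∈ Ioo a b, 0 < f₀ y)
    (hF₀pos : ∀ y ∈ Ioo a b, 0 < F₀ y) (hFa : Tendsto F₀ (𝓝[>] a) (𝓝 0))
    {θ₁ θ₂ u y : ℝ} (hθ : 0 < θ₁ + θ₂) (hu : a < u) (huy : u < y) (hy : y < b) :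
    ∫ v in a..y, dprh a b F₀ f₀ θ₁ θ₂ (θ₁ + θ₂) (θ₁ + θ₂) u v =
      f₀ u * F₀ u ^ (θ₁ + θ₂ - 1) * (θ₁ + (θ₁ + θ₂) * θ₂ * (log (F₀ y) - log (F₀ u))) := by
  have hu' : u ∈ Ioo a b := ⟨hu, huy.trans hy⟩
  obtain ⟨hint₁, hval₁⟩ :=
    intervalIntegrable_and_integral_mul_rpow_sub_one hderiv hf₀pos hF₀pos hFa hθ hu'
  obtain ⟨hint₂, hval₂⟩ :=
    intervalIntegrable_and_integral_div_eq_log_sub hderiv hf₀pos hF₀pos hu huy hy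
  have heq₁ : EqOn (fun v => θ₁ * (θ₁ + θ₂) * (f₀ u / F₀ u) * (f₀ v * F₀ v ^ (θ₁ + θ₂ - 1)))
      (dprh a b F₀ f₀ θ₁ θ₂ (θ₁ + θ₂) (θ₁ + θ₂) u) (Ioo a u) :=
    fun v hv => (dprh_case4_of_gt hv.1 hv.2 hu'.2).symm
  have heq₂ : EqOn (fun v => (θ₁ + θ₂) * θ₂ * (f₀ u * F₀ u ^ (θ₁ + θ₂ - 1)) * (f₀ v / F₀ v))
      (dprh a b F₀ f₀ θ₁ θ₂ (θ₁ + θ₂) (θ₁ + θ₂) u) (Ioo u y) :=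
    fun v hv => (dprh_case4_of_lt hu hv.1 (hv.2.trans hy)).symm
  rw [← intervalIntegral.integral_add_adjacent_intervals ((hint₁.const_mul _).congr_Ioo hu.le heq₁)
      ((hint₂.const_mul _).congr_Ioo huy.le heq₂),
    ← intervalIntegral.integral_congr_Ioo hu.le heq₁,
    ← intervalIntegral.integral_congr_Ioo huy.le heq₂,
    intervalIntegral.integral_const_mul, intervalIntegral.integral_const_mul, hval₁, hval₂]
  have hFu := hF₀pos u hu'
  rw [show F₀ u ^ (θ₁ + θ₂) = F₀ u ^ (θ₁ + θ₂ - 1) * F₀ u by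
    rw [← rpow_add_one hFu.ne']; ring_nf]
  field_simp

theorem integral_dprh_case4_of_gt
    (hderiv : ∀ y ∈ Ioo a b, HasDerivAt F₀ (f₀ y) y) (hf₀pos : ∀ y ∈ Ioo a b, 0 < f₀ y)
    (hF₀pos : ∀ y ∈ Ioo a b, 0 < F₀ y) (hFa : Tendsto F₀ (𝓝[>] a) (𝓝 0))
    {θ₁ θ₂ u y : ℝ} (hθ : 0 < θ₁ + θ₂) (hy : a < y) (hyu : y < u) (hu : u < b) :
    ∫ v in a..y, dprh a b F₀ f₀ θ₁ θ₂ (θ₁ + θ₂) (θ₁ + θ₂) u v =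
      θ₁ * F₀ y ^ (θ₁ + θ₂) * (f₀ u / F₀ u) := by
  have heq : EqOn (fun v => θ₁ * (θ₁ + θ₂) * (f₀ u / F₀ u) * (f₀ v * F₀ v ^ (θ₁ + θ₂ - 1)))
      (dprh a b F₀ f₀ θ₁ θ₂ (θ₁ + θ₂) (θ₁ + θ₂) u) (Ioo a y) :=
    fun v hv => (dprh_case4_of_gt hv.1 (hv.2.trans hyu) hu).symm
  rw [← intervalIntegral.integral_congr_Ioo hy.le heq, intervalIntegral.integral_const_mul,
    (intervalIntegrable_and_integral_mul_rpow_sub_one hderiv hf₀pos hF₀pos hFa hθ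
      ⟨hy, hyu.trans hu⟩).2]
  field_simp

theorem hasDerivAt_rpow_mul_one_add_mul_log_sub {f x C θ₁ θ₂ : ℝ} (hF : HasDerivAt F₀ f x)
    (hpos : 0 < F₀ x) :
    HasDerivAt (fun u => F₀ u ^ (θ₁ + θ₂) * (1 + θ₂ * (log C - log (F₀ u))))
      (f * F₀ x ^ (θ₁ + θ₂ - 1) * (θ₁ + (θ₁ + θ₂) * θ₂ * (log C - log (F₀ x)))) x := by
  refine ((hF.rpow_const (.inl hpos.ne')).mul
    ((((hF.log hpos.ne').const_sub (log C)).const_mul θ₂).const_add 1)).congr_deriv ?_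
  rw [show F₀ x ^ (θ₁ + θ₂) = F₀ x ^ (θ₁ + θ₂ - 1) * F₀ x by
    rw [← rpow_add_one hpos.ne']; ring_nf]
  field_simp
  ring

theorem tendsto_rpow_mul_one_add_mul_log_sub_nhdsGT_zero {θ θ₂ C : ℝ} (hθ : 0 < θ) :
    Tendsto (fun t => t ^ θ * (1 + θ₂ * (log C - log t))) (𝓝[>] 0) (𝓝 0) := by
  have hpow : Tendsto (fun t : ℝ => t ^ θ) (𝓝[>] 0) (𝓝 0) := by
    simpa [zero_rpow hθ.ne'] using
      ((continuousAt_id (x := (0 : ℝ))).rpow_const (.inr hθ.le)).tendsto.mono_left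
        nhdsWithin_le_nhds
  simpa using ((hpow.const_mul (1 + θ₂ * log C)).sub
    ((tendsto_log_mul_rpow_nhdsGT_zero hθ).const_mul θ₂)).congr fun t => by ring

theorem intervalIntegrable_and_integral_integral_dprh_case4_of_le
    (hderiv : ∀ y ∈ Ioo a b, HasDerivAt F₀ (f₀ y) y) (hmono : StrictMonoOn F₀ (Ioo a b))
    (hf₀pos : ∀ y ∈ Ioo a b, 0 < f₀ y) (hF₀pos : ∀ y ∈ Ioo a b, 0 < F₀ y)
    (hFa : Tendsto F₀ (𝓝[>] a) (𝓝[>] 0)) {θ₁ θ₂ c y : ℝ} (hθ₁ : 0 < θ₁) (hθ₂ : 0 < θ₂)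
    (hc : a < c) (hcy : c ≤ y) (hy : y < b) :
    IntervalIntegrable (fun u => ∫ v in a..y, dprh a b F₀ f₀ θ₁ θ₂ (θ₁ + θ₂) (θ₁ + θ₂) u v)
        volume a c ∧
      ∫ u in a..c, ∫ v in a..y, dprh a b F₀ f₀ θ₁ θ₂ (θ₁ + θ₂) (θ₁ + θ₂) u v =
        F₀ c ^ (θ₁ + θ₂) * (1 + θ₂ * (log (F₀ y) - log (F₀ c))) := by
  have hθ : 0 < θ₁ + θ₂ := by positivity
  have hsub : Ioc a c ⊆ Ioo a b := fun x hx => ⟨hx.1, hx.2.trans_lt (hcy.trans_lt hy)⟩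
  have hy' : y ∈ Ioo a b := ⟨hc.trans_le hcy, hy⟩
  have hg (x) (hx : x ∈ Ioc a c) := hasDerivAt_rpow_mul_one_add_mul_log_sub (C := F₀ y)
    (θ₁ := θ₁) (θ₂ := θ₂) (hderiv x (hsub hx)) (hF₀pos x (hsub hx))
  have hg' (x) (hx : x ∈ Ioo a c) :
      0 ≤ f₀ x * F₀ x ^ (θ₁ + θ₂ - 1) * (θ₁ + (θ₁ + θ₂) * θ₂ * (log (F₀ y) - log (F₀ x))) := by
    have hx' := hsub (Ioo_subset_Ioc_self hx)
    have hlog : 0 ≤ log (F₀ y) - log (F₀ x) := sub_nonneg.2 <|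
      log_le_log (hF₀pos x hx') (hmono.monotoneOn hx' hy' (hx.2.le.trans hcy))
    have := hf₀pos x hx'
    have := hF₀pos x hx'
    positivity
  have hgL := (tendsto_rpow_mul_one_add_mul_log_sub_nhdsGT_zero (C := F₀ y) (θ₂ := θ₂) hθ).comp hFa
  have heq : EqOn
      (fun x => f₀ x * F₀ x ^ (θ₁ + θ₂ - 1) * (θ₁ + (θ₁ + θ₂) * θ₂ * (log (F₀ y) - log (F₀ x))))
      (fun u => ∫ v in a..y, dprh a b F₀ f₀ θ₁ θ₂ (θ₁ + θ₂) (θ₁ + θ₂) u v) (Ioo a c) :=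
    fun u hu => (integral_dprh_case4_of_lt hderiv hf₀pos hF₀pos (hFa.mono_right nhdsWithin_le_nhds)
      hθ hu.1 (hu.2.trans_le hcy) hy).symm
  refine ⟨(intervalIntegrable_deriv_of_nonneg_of_tendsto hc hg hg' hgL).congr_Ioo hc.le heq, ?_⟩
  rw [← intervalIntegral.integral_congr_Ioo hc.le heq,
    integral_eq_sub_of_hasDerivAt_of_nonneg_of_tendsto hc hg hg' hgL, sub_zero]

theorem integral_integral_dprh_case4_of_gt
    (hderiv : ∀ y ∈ Ioo a b, HasDerivAt F₀ (f₀ y) y) (hmono : StrictMonoOn F₀ (Ioo a b))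
    (hf₀pos : ∀ y ∈ Ioo a b, 0 < f₀ y) (hF₀pos : ∀ y ∈ Ioo a b, 0 < F₀ y)
    (hFa : Tendsto F₀ (𝓝[>] a) (𝓝[>] 0)) {θ₁ θ₂ c y : ℝ} (hθ₁ : 0 < θ₁) (hθ₂ : 0 < θ₂)
    (hy : a < y) (hyc : y < c) (hc : c < b) :
    ∫ u in a..c, ∫ v in a..y, dprh a b F₀ f₀ θ₁ θ₂ (θ₁ + θ₂) (θ₁ + θ₂) u v =
      F₀ y ^ (θ₁ + θ₂) * (1 + θ₁ * (log (F₀ c) - log (F₀ y))) := by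
  obtain ⟨hint₁, hval₁⟩ := intervalIntegrable_and_integral_integral_dprh_case4_of_le hderiv hmono
    hf₀pos hF₀pos hFa hθ₁ hθ₂ hy le_rfl (hyc.trans hc)
  obtain ⟨hint₂, hval₂⟩ :=
    intervalIntegrable_and_integral_div_eq_log_sub hderiv hf₀pos hF₀pos hy hyc hc
  have heq : EqOn (fun u => θ₁ * F₀ y ^ (θ₁ + θ₂) * (f₀ u / F₀ u))
      (fun u => ∫ v in a..y, dprh a b F₀ f₀ θ₁ θ₂ (θ₁ + θ₂) (θ₁ + θ₂) u v) (Ioo y c) :=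
    fun u hu => (integral_dprh_case4_of_gt hderiv hf₀pos hF₀pos (hFa.mono_right nhdsWithin_le_nhds)
      (by positivity) hy hu.1 (hu.2.trans hc)).symm
  rw [← intervalIntegral.integral_add_adjacent_intervals hint₁
      ((hint₂.const_mul _).congr_Ioo hyc.le heq), hval₁,
    ← intervalIntegral.integral_congr_Ioo hyc.le heq, intervalIntegral.integral_const_mul, hval₂]
  ring

end DPRH

theorem dprh_cdf_case4_general
    (a b : ℝ) (hab : a < b) (F₀ f₀ : ℝ → ℝ)
    (hderiv : ∀ y ∈ Ioo a b, HasDerivAt F₀ (f₀ y) y)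
    (hmono : StrictMonoOn F₀ (Ioo a b))
    (hf₀pos : ∀ y ∈ Ioo a b, 0 < f₀ y)
    (hF₀pos : ∀ y ∈ Ioo a b, 0 < F₀ y)
    (hFa : Filter.Tendsto F₀ (nhdsWithin a (Ioi a)) (nhds 0))
    (θ₁ θ₂ θ₁' θ₂' : ℝ) (hθ₁ : 0 < θ₁) (hθ₂ : 0 < θ₂)
    (heq₁ : θ₁ + θ₂ = θ₁') (heq₂ : θ₁ + θ₂ = θ₂') (y₁ y₂ : ℝ)
    :
    (a < y₁ → y₁ < y₂ → y₂ < b →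
      (∫ u in a..y₁, ∫ v in a..y₂, dprh a b F₀ f₀ θ₁ θ₂ θ₁' θ₂' u v) =
        F₀ y₁ ^ (θ₁ + θ₂) * (1 + θ₂ * Real.log (F₀ y₂ / F₀ y₁))) ∧
    (a < y₂ → y₂ < y₁ → y₁ < b →
      (∫ u in a..y₁, ∫ v in a..y₂, dprh a b F₀ f₀ θ₁ θ₂ θ₁' θ₂' u v) =
        F₀ y₂ ^ (θ₁ + θ₂) * (1 + θ₁ * Real.log (F₀ y₁ / F₀ y₂))) := by
  subst heq₁ heq₂
  have hFa' : Tendsto F₀ (𝓝[>] a) (𝓝[>] 0) :=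
    tendsto_nhdsWithin_of_tendsto_nhds_of_eventually_within _ hFa <| by
      filter_upwards [Ioo_mem_nhdsGT hab] with y hy using hF₀pos y hy
  refine ⟨fun h₁ h₁₂ h₂ => ?_, fun h₂ h₂₁ h₁ => ?_⟩
  · rw [(intervalIntegrable_and_integral_integral_dprh_case4_of_le hderiv hmono hf₀pos hF₀pos hFa'
      hθ₁ hθ₂ h₁ h₁₂.le h₂).2,
      log_div (hF₀pos y₂ ⟨h₁.trans h₁₂, h₂⟩).ne' (hF₀pos y₁ ⟨h₁, h₁₂.trans h₂⟩).ne']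
  · rw [integral_integral_dprh_case4_of_gt hderiv hmono hf₀pos hF₀pos hFa' hθ₁ hθ₂ h₂ h₂₁ h₁,
      log_div (hF₀pos y₁ ⟨h₂.trans h₂₁, h₁⟩).ne' (hF₀pos y₂ ⟨h₂, h₂₁.trans h₁⟩).ne']

theorem dprh_cdf_case4
    (a b : ℝ) (hab : a < b) (F₀ f₀ : ℝ → ℝ)
    (hderiv : ∀ y ∈ Ioo a b, HasDerivAt F₀ (f₀ y) y)
    (hf₀cont : ContinuousOn f₀ (Ioo a b))
    (hmono : StrictMonoOn F₀ (Ioo a b))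
    (hf₀pos : ∀ y ∈ Ioo a b, 0 < f₀ y)
    (hF₀pos : ∀ y ∈ Ioo a b, 0 < F₀ y)
    (hF₀lt1 : ∀ y ∈ Ioo a b, F₀ y < 1)
    (hFa : Filter.Tendsto F₀ (nhdsWithin a (Ioi a)) (nhds 0))
    (hFb : Filter.Tendsto F₀ (nhdsWithin b (Iio b)) (nhds 1))
    (θ₁ θ₂ θ₁' θ₂' : ℝ) (hθ₁ : 0 < θ₁) (hθ₂ : 0 < θ₂) (hθ₁' : 0 < θ₁') (hθ₂' : 0 < θ₂')
    (heq₁ : θ₁ + θ₂ = θ₁') (heq₂ : θ₁ + θ₂ = θ₂') (y₁ y₂ : ℝ)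
    :
    (a < y₁ → y₁ < y₂ → y₂ < b →
      (∫ u in a..y₁, ∫ v in a..y₂, dprh a b F₀ f₀ θ₁ θ₂ θ₁' θ₂' u v) =
        F₀ y₁ ^ (θ₁ + θ₂) * (1 + θ₂ * Real.log (F₀ y₂ / F₀ y₁))) ∧
    (a < y₂ → y₂ < y₁ → y₁ < b →
      (∫ u in a..y₁, ∫ v in a..y₂, dprh a b F₀ f₀ θ₁ θ₂ θ₁' θ₂' u v) =
        F₀ y₂ ^ (θ₁ + θ₂) * (1 + θ₁ * Real.log (F₀ y₁ / F₀ y₂))) :=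
  dprh_cdf_case4_general a b hab F₀ f₀ hderiv hmono hf₀pos hF₀pos hFa θ₁ θ₂ θ₁' θ₂' hθ₁ hθ₂ heq₁
    heq₂ y₁ y₂
end
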